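/- Let Φ be a simply laced finite crystallographic root system and suppose [β₁, β₂] is a nonempty chain in the root poset for distinct positive roots β₁ < β₂. Then β₂ − β₁ is a positive root. -/

import Mathlib

open scoped RealInnerProductSpace

/-- A finite crystallographic (reduced) root system in a Euclidean space `V`. -/
structure RootSystemData (V : Type*) [NormedAddCommGroup V] [InnerProductSpace ℝ V] where
  Φ : Set V
  finite : Φ.Finite
  nonzero : ∀ γ ∈ Φ, γ ≠ 0
  neg_mem : ∀ γ ∈ Φ, -γ ∈ Φ
  reflect_mem : ∀ α ∈ Φ, ∀ β ∈ Φ, β - (2 * ⟪α, β⟫ / ⟪α, α⟫) • α ∈ Φ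
  crystallographic : ∀ α ∈ Φ, ∀ β ∈ Φ, ∃ n : ℤ, 2 * ⟪α, β⟫ / ⟪α, α⟫ = (n : ℝ)
  reduced : ∀ γ ∈ Φ, ∀ t : ℝ, t • γ ∈ Φ → t = 1 ∨ t = -1

/-- A base (system of simple roots) for a root system: the simple roots form a basis of `V`
and every root has coordinates that are all nonnegative integers or all nonpositive integers. -/
structure RootBase {V : Type*} [NormedAddCommGroup V] [InnerProductSpace ℝ V]
    (R : RootSystemData V) (ι : Type*) [Fintype ι] where
  b : Module.Basis ι ℝ V
  simple_mem : ∀ i, b i ∈ R.Φ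
  coord_sign : ∀ γ ∈ R.Φ, (∀ i, 0 ≤ b.repr γ i) ∨ (∀ i, b.repr γ i ≤ 0)
  coord_int : ∀ γ ∈ R.Φ, ∀ i, ∃ n : ℤ, b.repr γ i = (n : ℝ)

namespace RootBase

variable {V : Type*} [NormedAddCommGroup V] [InnerProductSpace ℝ V]
  {R : RootSystemData V} {ι : Type*} [Fintype ι]

/-- `γ` is a positive root. -/
def IsPos (B : RootBase R ι) (γ : V) : Prop := γ ∈ R.Φ ∧ ∀ i, 0 ≤ B.b.repr γ i

/-- The set of positive roots. -/
def Pos (B : RootBase R ι) : Set V := {γ | B.IsPos γ}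

/-- The root poset order: coordinatewise comparison over the simple roots. -/
def rle (B : RootBase R ι) (γ γ' : V) : Prop := ∀ i, B.b.repr γ i ≤ B.b.repr γ' i

end RootBase

/-- All roots have the same length. -/
def RootSystemData.SimplyLaced {V : Type*} [NormedAddCommGroup V] [InnerProductSpace ℝ V]
    (R : RootSystemData V) : Prop := ∀ γ ∈ R.Φ, ∀ γ' ∈ R.Φ, ⟪γ, γ⟫ = ⟪γ', γ'⟫

/-!
Induction on the height of `β₂ - β₁`. Since `⟪β₂ - β₁, β₂⟫ - ⟪β₂ - β₁, β₁⟫ > 0`, some simple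
root `α` occurring in `β₂ - β₁` can be added to `β₁` or subtracted from `β₂` inside the
interval, and induction makes `ε = β₂ - β₁ - α` a positive root. If `⟪α, ε⟫ < 0`, then `ε + α`
is a root. Otherwise simple lacedness forces `⟪α, ε⟫ = 0` and puts both `β₁ + α` and `β₂ - α`
into the interval, where the chain condition makes them comparable. Either order contradicts
`⟪α, ε⟫ = 0`: `β₂ - α ≤ β₁ + α` makes `ε` a multiple of `α`, while `β₁ + α < β₂ - α` makes
`ε - α` a root by induction, impossible as `‖ε - α‖² = 2‖α‖²`.
-/

namespace RootSystemData

variable {V : Type*} [NormedAddCommGroup V] [InnerProductSpace ℝ V] {R : RootSystemData V}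
  {α β : V}

theorem inner_self_pos {γ : V} (hγ : γ ∈ R.Φ) : 0 < ⟪γ, γ⟫ :=
  real_inner_self_pos.2 (R.nonzero γ hγ)

theorem two_inner_le_inner_self (hSL : R.SimplyLaced) (hα : α ∈ R.Φ) (hβ : β ∈ R.Φ)
    (hne : β ≠ α) : 2 * ⟪α, β⟫ ≤ ⟪α, α⟫ := by
  obtain ⟨n, hn⟩ := R.crystallographic α hα β hβ
  have hα₀ := inner_self_pos hα
  rw [div_eq_iff hα₀.ne'] at hn
  have hdist : 0 < ⟪β - α, β - α⟫ := real_inner_self_pos.2 (sub_ne_zero.2 hne)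
  rw [real_inner_sub_sub_self, hSL β hβ α hα, real_inner_comm α β] at hdist
  have hn_lt : (n : ℝ) < 2 := by nlinarith
  have hn_le : (n : ℝ) ≤ 1 := by
    have : n < 2 := by exact_mod_cast hn_lt
    exact_mod_cast (by omega : n ≤ 1)
  nlinarith

theorem neg_inner_self_le_two_inner (hSL : R.SimplyLaced) (hα : α ∈ R.Φ) (hβ : β ∈ R.Φ)
    (hne : β ≠ -α) : -⟪α, α⟫ ≤ 2 * ⟪α, β⟫ := by
  have := two_inner_le_inner_self hSL (R.neg_mem α hα) hβ hne
  rw [inner_neg_left, inner_neg_neg] at this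
  linarith

theorem sub_mem_of_inner_pos (hSL : R.SimplyLaced) (hα : α ∈ R.Φ) (hβ : β ∈ R.Φ)
    (hpos : 0 < ⟪α, β⟫) (hne : β ≠ α) : β - α ∈ R.Φ := by
  have hα₀ := inner_self_pos hα
  have hcartan : 2 * ⟪α, β⟫ / ⟪α, α⟫ = 1 := by
    obtain ⟨n, hn⟩ := R.crystallographic α hα β hβ
    have hn_pos : (0 : ℝ) < n := hn ▸ div_pos (by linarith) hα₀
    have hn_le : (n : ℝ) ≤ 1 :=
      hn ▸ (div_le_one hα₀).2 (two_inner_le_inner_self hSL hα hβ hne)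
    have : n = 1 := by
      have : 0 < n := by exact_mod_cast hn_pos
      have : n ≤ 1 := by exact_mod_cast hn_le
      omega
    rw [hn, this, Int.cast_one]
  simpa only [hcartan, one_smul] using R.reflect_mem α hα β hβ

theorem add_mem_of_inner_neg (hSL : R.SimplyLaced) (hα : α ∈ R.Φ) (hβ : β ∈ R.Φ)
    (hneg : ⟪α, β⟫ < 0) (hne : β ≠ -α) : β + α ∈ R.Φ := by
  simpa using sub_mem_of_inner_pos hSL (R.neg_mem α hα) hβ (by rwa [inner_neg_left, neg_pos]) hne

theorem sub_notMem_of_inner_eq_zero (hSL : R.SimplyLaced) (hα : α ∈ R.Φ) (hβ : β ∈ R.Φ)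
    (h : ⟪α, β⟫ = 0) : β - α ∉ R.Φ := by
  intro hmem
  have hlen := hSL _ hmem α hα
  rw [real_inner_sub_sub_self, hSL β hβ α hα, real_inner_comm α β, h] at hlen
  linarith [inner_self_pos hα]

end RootSystemData

namespace RootBase

variable {V : Type*} [NormedAddCommGroup V] [InnerProductSpace ℝ V]
  {R : RootSystemData V} {ι : Type*} [Fintype ι] {B : RootBase R ι} {x y z β β₁ β₂ : V}

def interval (B : RootBase R ι) (β₁ β₂ : V) : Set V :=
  {γ | B.IsPos γ ∧ B.rle β₁ γ ∧ B.rle γ β₂}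

noncomputable def height (B : RootBase R ι) : V →ₗ[ℝ] ℝ := ∑ i, B.b.coord i

theorem height_apply (x : V) : B.height x = ∑ i, B.b.repr x i := by
  simp [height]

theorem height_simple (i : ι) : B.height (B.b i) = 1 := by
  simp [height_apply]

theorem rle.trans (hxy : B.rle x y) (hyz : B.rle y z) : B.rle x z :=
  fun i => (hxy i).trans (hyz i)

theorem rle_iff_repr_sub_nonneg : B.rle x y ↔ ∀ i, 0 ≤ B.b.repr (y - x) i := by
  simp [rle]

theorem rle_sub_iff_add_rle : B.rle x (y - z) ↔ B.rle (x + z) y := by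
  simp [rle, le_sub_iff_add_le]

theorem rle_add_simple (x : V) (i : ι) : B.rle x (x + B.b i) := fun k => by
  simpa using Finsupp.single_nonneg.2 zero_le_one k

theorem sub_simple_rle (x : V) (i : ι) : B.rle (x - B.b i) x := by
  simpa using B.rle_add_simple (x - B.b i) i

theorem add_simple_rle_of_repr_lt (hβ₁ : β₁ ∈ R.Φ) (hβ₂ : β₂ ∈ R.Φ) (hle : B.rle β₁ β₂) {i : ι}
    (hlt : B.b.repr β₁ i < B.b.repr β₂ i) : B.rle (β₁ + B.b i) β₂ := by
  obtain ⟨m₁, hm₁⟩ := B.coord_int β₁ hβ₁ i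
  obtain ⟨m₂, hm₂⟩ := B.coord_int β₂ hβ₂ i
  intro k
  rcases eq_or_ne i k with rfl | hik
  · rw [hm₁, hm₂] at hlt
    have : m₁ + 1 ≤ m₂ := by exact_mod_cast hlt
    simpa [hm₁, hm₂] using (by exact_mod_cast this : (m₁ : ℝ) + 1 ≤ m₂)
  · simpa [Finsupp.single_apply, hik] using hle k

theorem eq_of_rle_of_height_nonpos (hle : B.rle x y) (hh : B.height (y - x) ≤ 0) : x = y := by
  have hnn := rle_iff_repr_sub_nonneg.1 hle
  rw [height_apply] at hh
  have hzero := (Finset.sum_eq_zero_iff_of_nonneg fun i _ => hnn i).1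
    (hh.antisymm (Finset.sum_nonneg fun i _ => hnn i))
  refine (sub_eq_zero.1 (B.b.repr.injective ?_)).symm
  ext i
  simpa using hzero i (Finset.mem_univ i)

theorem eq_smul_simple_of_rle_simple (hx : ∀ k, 0 ≤ B.b.repr x k) {i : ι}
    (h : B.rle x (B.b i)) : x = B.b.repr x i • B.b i := by
  refine B.b.repr.injective (Finsupp.ext fun k => ?_)
  rcases eq_or_ne i k with rfl | hik
  · simp
  · simpa [Finsupp.single_apply, hik] using
      le_antisymm (by simpa [Finsupp.single_apply, hik] using h k) (hx k)

theorem IsPos.not_rle_simple_of_inner_eq_zero (hx : B.IsPos x) {i : ι} (h : ⟪B.b i, x⟫ = 0) :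
    ¬ B.rle x (B.b i) := by
  intro hle
  have hsmul := eq_smul_simple_of_rle_simple hx.2 hle
  rw [hsmul, real_inner_smul_right, mul_eq_zero,
    or_iff_left (RootSystemData.inner_self_pos (B.simple_mem i)).ne'] at h
  exact R.nonzero x hx.1 (by rw [hsmul, h, zero_smul])

theorem exists_repr_pos_inner_neg (hx : ∀ k, 0 ≤ B.b.repr x k) (h : ⟪x, y⟫ < 0) :
    ∃ j, 0 < B.b.repr x j ∧ ⟪B.b j, y⟫ < 0 := by
  by_contra! hcon
  have hexp : ⟪x, y⟫ = ∑ j, B.b.repr x j * ⟪B.b j, y⟫ := by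
    conv_lhs => rw [← B.b.sum_repr x]
    rw [sum_inner]
    simp only [real_inner_smul_left]
  refine h.not_ge (hexp ▸ Finset.sum_nonneg fun j _ => ?_)
  rcases (hx j).eq_or_lt with h0 | h0
  · simp [← h0]
  · exact mul_nonneg h0.le (hcon j h0)

theorem isPos_of_rle (hβ : B.IsPos β) (hx : x ∈ R.Φ) (h : B.rle β x) : B.IsPos x :=
  ⟨hx, fun i => (hβ.2 i).trans (h i)⟩

theorem IsPos.ne_neg_simple (hβ : B.IsPos β) (i : ι) : β ≠ -B.b i := by
  rintro rfl
  exact absurd (hβ.2 i) (by simp)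

theorem IsPos.not_rle_zero (hβ : B.IsPos β) : ¬ B.rle β 0 := by
  intro h
  refine R.nonzero β hβ.1 (B.b.repr.injective (Finsupp.ext fun i => ?_))
  simpa using le_antisymm (by simpa using h i) (hβ.2 i)

theorem interval_subset_interval (h₁ : B.rle β₁ x) (h₂ : B.rle y β₂) :
    B.interval x y ⊆ B.interval β₁ β₂ :=
  fun _ ⟨hγ, hxγ, hγy⟩ => ⟨hγ, h₁.trans hxγ, hγy.trans h₂⟩

theorem add_simple_mem_interval (hβ₁ : B.IsPos β₁) {i : ι} (hmem : β₁ + B.b i ∈ R.Φ)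
    (hle : B.rle (β₁ + B.b i) β₂) : β₁ + B.b i ∈ B.interval β₁ β₂ :=
  ⟨isPos_of_rle hβ₁ hmem (B.rle_add_simple β₁ i), B.rle_add_simple β₁ i, hle⟩

theorem sub_simple_mem_interval (hβ₁ : B.IsPos β₁) {i : ι} (hmem : β₂ - B.b i ∈ R.Φ)
    (hle : B.rle (β₁ + B.b i) β₂) : β₂ - B.b i ∈ B.interval β₁ β₂ :=
  ⟨isPos_of_rle hβ₁ hmem (rle_sub_iff_add_rle.2 hle), rle_sub_iff_add_rle.2 hle,
    B.sub_simple_rle β₂ i⟩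

theorem ne_simple_of_add_simple_rle (hβ₁ : B.IsPos β₁) {i : ι} (h : B.rle (β₁ + B.b i) β₂) :
    β₂ ≠ B.b i := by
  rintro rfl
  exact hβ₁.not_rle_zero (by simpa using rle_sub_iff_add_rle.2 h)

theorem exists_simple_rle_sub_isPos (hSL : R.SimplyLaced) (hβ₁ : B.IsPos β₁)
    (hβ₂ : B.IsPos β₂) (hne : β₁ ≠ β₂) (hle : B.rle β₁ β₂)
    (ih : ∀ γ₁ ∈ B.interval β₁ β₂, ∀ γ₂ ∈ B.interval β₁ β₂, γ₁ ≠ γ₂ → B.rle γ₁ γ₂ →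
      B.height (γ₂ - γ₁) ≤ B.height (β₂ - β₁) - 1 → B.IsPos (γ₂ - γ₁)) :
    ∃ i, B.rle (β₁ + B.b i) β₂ ∧ (β₂ - β₁ = B.b i ∨ B.IsPos (β₂ - β₁ - B.b i)) := by
  have hd := rle_iff_repr_sub_nonneg.1 hle
  have hdd : 0 < ⟪β₂ - β₁, β₂ - β₁⟫ := real_inner_self_pos.2 (sub_ne_zero.2 hne.symm)
  rw [inner_sub_right] at hdd
  have hβ₁_mem : β₁ ∈ B.interval β₁ β₂ := ⟨hβ₁, fun _ => le_rfl, hle⟩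
  have hβ₂_mem : β₂ ∈ B.interval β₁ β₂ := ⟨hβ₂, hle, fun _ => le_rfl⟩
  by_cases hβ₁_neg : ⟪β₂ - β₁, β₁⟫ < 0
  · obtain ⟨i, hdi, hi⟩ := exists_repr_pos_inner_neg hd hβ₁_neg
    have hrle := add_simple_rle_of_repr_lt hβ₁.1 hβ₂.1 hle (by simpa using hdi)
    have hγ := add_simple_mem_interval hβ₁
      (R.add_mem_of_inner_neg hSL (B.simple_mem i) hβ₁.1 hi (hβ₁.ne_neg_simple i)) hrle
    refine ⟨i, hrle, ?_⟩
    by_cases hγβ₂ : β₁ + B.b i = β₂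
    · exact .inl (by rw [← hγβ₂]; abel)
    · refine .inr (sub_add_eq_sub_sub β₂ β₁ (B.b i) ▸ ih _ hγ β₂ hβ₂_mem hγβ₂ hrle ?_)
      simp only [map_sub, map_add, height_simple]
      linarith
  · obtain ⟨i, hdi, hi⟩ := exists_repr_pos_inner_neg hd (y := -β₂) (by
      rw [inner_neg_right]
      linarith)
    rw [inner_neg_right, neg_neg_iff_pos] at hi
    have hrle := add_simple_rle_of_repr_lt hβ₁.1 hβ₂.1 hle (by simpa using hdi)
    have hδ := sub_simple_mem_interval hβ₁ (R.sub_mem_of_inner_pos hSL (B.simple_mem i) hβ₂.1 hi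
      (ne_simple_of_add_simple_rle hβ₁ hrle)) hrle
    refine ⟨i, hrle, ?_⟩
    by_cases hβ₁δ : β₁ = β₂ - B.b i
    · exact .inl (by rw [hβ₁δ]; abel)
    · refine .inr (sub_right_comm β₂ (B.b i) β₁ ▸ ih β₁ hβ₁_mem _ hδ hβ₁δ hδ.2.1 ?_)
      simp only [map_sub, height_simple]
      linarith

theorem sub_mem_of_sub_simple_isPos (hSL : R.SimplyLaced) (hβ₁ : B.IsPos β₁)
    (hβ₂ : B.IsPos β₂) (hchain : IsChain B.rle (B.interval β₁ β₂))
    (ih : ∀ γ₁ ∈ B.interval β₁ β₂, ∀ γ₂ ∈ B.interval β₁ β₂, γ₁ ≠ γ₂ → B.rle γ₁ γ₂ →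
      B.height (γ₂ - γ₁) ≤ B.height (β₂ - β₁) - 1 → B.IsPos (γ₂ - γ₁))
    {i : ι} (hrle : B.rle (β₁ + B.b i) β₂) (hε : B.IsPos (β₂ - β₁ - B.b i)) :
    β₂ - β₁ ∈ R.Φ := by
  have hα := B.simple_mem i
  have hα₀ := RootSystemData.inner_self_pos hα
  by_contra hd
  have hαε : 0 ≤ ⟪B.b i, β₂ - β₁ - B.b i⟫ := not_lt.1 fun h => hd <| by
    simpa using R.add_mem_of_inner_neg hSL hα hε.1 h (hε.ne_neg_simple i)
  have hβ₂i := ne_simple_of_add_simple_rle hβ₁ hrle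
  have h₁ := R.neg_inner_self_le_two_inner hSL hα hβ₁.1 (hβ₁.ne_neg_simple i)
  have h₂ := R.two_inner_le_inner_self hSL hα hβ₂.1 hβ₂i
  have hsplit : ⟪B.b i, β₂⟫ = ⟪B.b i, β₁⟫ + ⟪B.b i, β₂ - β₁ - B.b i⟫ + ⟪B.b i, B.b i⟫ := by
    rw [← inner_add_right, ← inner_add_right]
    congr 1
    abel
  have hε₀ : ⟪B.b i, β₂ - β₁ - B.b i⟫ = 0 := by linarith
  have hγ := add_simple_mem_interval hβ₁
    (R.add_mem_of_inner_neg hSL hα hβ₁.1 (by linarith) (hβ₁.ne_neg_simple i)) hrle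
  have hδ := sub_simple_mem_interval hβ₁
    (R.sub_mem_of_inner_pos hSL hα hβ₂.1 (by linarith) hβ₂i) hrle
  by_cases hδγ : B.rle (β₂ - B.b i) (β₁ + B.b i)
  · refine hε.not_rle_simple_of_inner_eq_zero hε₀ fun k => ?_
    have := hδγ k
    simp only [map_add, map_sub, Finsupp.add_apply, Finsupp.sub_apply] at this ⊢
    linarith
  · have hγδ_ne : β₁ + B.b i ≠ β₂ - B.b i := fun h => hδγ (h ▸ fun _ => le_rfl)
    have hγδ := (hchain hγ hδ hγδ_ne).resolve_right hδγ
    have hζ := ih _ hγ _ hδ hγδ_ne hγδ (by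
      simp only [map_sub, map_add, height_simple]
      linarith)
    refine R.sub_notMem_of_inner_eq_zero hSL hα hε.1 hε₀ ?_
    convert hζ.1 using 1
    abel

end RootBase

/-- In a simply laced root system, if the interval [β₁, β₂] in the root poset is a
(nonempty) chain for distinct positive roots β₁ < β₂, then β₂ - β₁ is a positive root. -/
theorem chain_interval_difference_simply_laced {V : Type*}
    [NormedAddCommGroup V] [InnerProductSpace ℝ V]
    {ι : Type*} [Fintype ι] (R : RootSystemData V) (B : RootBase R ι)
    (hSL : R.SimplyLaced)
    (β₁ β₂ : V) (hβ₁ : B.IsPos β₁) (hβ₂ : B.IsPos β₂) (hne : β₁ ≠ β₂) (hle : B.rle β₁ β₂)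
    (hchain : IsChain B.rle {γ | B.IsPos γ ∧ B.rle β₁ γ ∧ B.rle γ β₂}) :
    B.IsPos (β₂ - β₁) := by
  obtain ⟨n, hn⟩ := exists_nat_ge (B.height (β₂ - β₁))
  induction n generalizing β₁ β₂ with
  | zero => exact absurd (B.eq_of_rle_of_height_nonpos hle (mod_cast hn)) hne
  | succ n ihn =>
    have ih : ∀ γ₁ ∈ B.interval β₁ β₂, ∀ γ₂ ∈ B.interval β₁ β₂, γ₁ ≠ γ₂ → B.rle γ₁ γ₂ →
        B.height (γ₂ - γ₁) ≤ B.height (β₂ - β₁) - 1 → B.IsPos (γ₂ - γ₁) :=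
      fun γ₁ hγ₁ γ₂ hγ₂ hγ hγle hh => ihn γ₁ γ₂ hγ₁.1 hγ₂.1 hγ hγle
        (hchain.mono (RootBase.interval_subset_interval hγ₁.2.1 hγ₂.2.2))
        (by push_cast at hn; linarith)
    refine ⟨?_, RootBase.rle_iff_repr_sub_nonneg.1 hle⟩
    obtain ⟨i, hrle, hsimple | hε⟩ := B.exists_simple_rle_sub_isPos hSL hβ₁ hβ₂ hne hle ih
    · exact hsimple ▸ B.simple_mem i
    · exact B.sub_mem_of_sub_simple_isPos hSL hβ₁ hβ₂ hchain ih hrle hε
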